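/- Let (∇_i)_{i∈I} be a finite family of lattice polyhedra in ℝʳ, all with the same tail cone C₀, such that ∇ := ⋃_{i∈I} ∇_i is a lattice polyhedron with tail cone C₀ and every nonempty intersection ∇_{I'} := ⋂_{i∈I'} ∇_i (∅ ≠ I' ⊆ I) is a lattice polyhedron with tail cone C₀; define F(∅) := ∇ and F(I') := ∇_{I'}. Then for every convex cone C ⊆ ℝʳ generated with nonnegative real coefficients by a finite subset of ℤʳ, and for every m ∈ ℝʳ, the evaluation subcomplex C^{F^C}_•(m) of the contravariant functor F^C(I') := F(I') + C (Minkowski sum) is exact. -/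

import Mathlib

open Pointwise

noncomputable section

variable {I : Type*} [Fintype I] [LinearOrder I]

/-- The basis vector `e_J` of the Koszul complex `⋀^• ℂ^I`, indexed by the subset
`J = {i_0 < ⋯ < i_{p-1}} ⊆ I`.  The total space of the Koszul complex is modelled as
`Finset I → ℂ`, with `⋀^p ℂ^I` the span of the `e_J` with `J.card = p`. -/
def eVec (J : Finset I) : Finset I → ℂ := fun K => if K = J then 1 else 0

/-- The Koszul differential: `d (e_{I'}) = ∑_j (-1)^j e_{I' \ {i_j}}` for
`I' = {i_0 < ⋯ < i_p}`. -/
def koszulD : (Finset I → ℂ) →ₗ[ℂ] (Finset I → ℂ) where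
  toFun f := fun J => ∑ i ∈ Jᶜ, (-1 : ℂ) ^ (J.filter (· < i)).card * f (insert i J)
  map_add' f g := by
    funext J
    simp [mul_add, Finset.sum_add_distrib]
  map_smul' c f := by
    funext J
    simp only [Pi.smul_apply, smul_eq_mul, RingHom.id_apply, Finset.mul_sum]
    exact Finset.sum_congr rfl fun i _ => by ring

/-- The degree-`p` part of the evaluation subcomplex `C^G_•(m)`:
the span of the `e_{I'}` with `#I' = p` and `m ∈ G(I')`. -/
def evalC {α : Type*} (F : Finset I → Set α) (m : α) (p : ℕ) :
    Submodule ℂ (Finset I → ℂ) :=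
  Submodule.span ℂ {v | ∃ J : Finset I, J.card = p ∧ m ∈ F J ∧ v = eVec J}

/-- Exactness of the evaluation subcomplex `C^G_•(m)`: its homology vanishes in every
degree `p ≥ 0`. -/
def evalExact {α : Type*} (F : Finset I → Set α) (m : α) : Prop :=
  ∀ p : ℕ, ∀ x ∈ evalC F m p, koszulD x = 0 →
    ∃ y ∈ evalC F m (p + 1), koszulD y = x

/-- The contravariant functor associated to a family `(∇_i)_{i ∈ I}` of subsets:
`F(∅) = ⋃_i ∇_i` and `F(I') = ⋂_{i ∈ I'} ∇_i` for nonempty `I' ⊆ I`. -/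
def familyFunctor {α : Type*} (nab : I → Set α) (J : Finset I) : Set α :=
  if J = ∅ then ⋃ i, nab i else ⋂ i ∈ J, nab i

/-- The canonical inclusion of the standard lattice `ℤʳ` into `ℝʳ`. -/
def intVec {r : ℕ} (v : Fin r → ℤ) : Fin r → ℝ := fun i => (v i : ℝ)

/-- The convex cone generated with nonnegative real coefficients by the finite set
`G` of lattice points of `ℤʳ`. -/
def latticeCone {r : ℕ} (G : Finset (Fin r → ℤ)) : Set (Fin r → ℝ) :=
  {x | ∃ c : (Fin r → ℤ) → ℝ, (∀ g, 0 ≤ c g) ∧ x = ∑ g ∈ G, c g • intVec g}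

/-- `A ⊆ ℝʳ` is a lattice polyhedron with tail cone `latticeCone G`:
the Minkowski sum of the convex hull of a finite nonempty set of lattice points
and the cone `latticeCone G`. -/
def IsLatticePolyhedron {r : ℕ} (G : Finset (Fin r → ℤ)) (A : Set (Fin r → ℝ)) : Prop :=
  ∃ S : Finset (Fin r → ℤ), S.Nonempty ∧ A = convexHull ℝ (intVec '' ↑S) + latticeCone G

/-!
`evalExact F m` says that the simplicial complex `{J | m ∈ F J}`, augmented by the empty face,
has vanishing reduced homology. Without a cone this complex is empty or the full simplex on
`{i | m ∈ ∇ᵢ}`, which is acyclic (cone it off from its least vertex). Adding a generator `g`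
to the cone replaces the complex at `m` by the union over `t ≥ 0` of the complexes at `m - t • g`.
As `F J + C` is closed and convex, for each face `J` the admissible `t` form a closed interval;
between two consecutive endpoints of these finitely many intervals, the complexes at the two
endpoints intersect in the complex at the midpoint. The union is thus a chain of acyclic
complexes with acyclic consecutive intersections, hence acyclic by Mayer–Vietoris.
-/

def koszulChains (𝒜 : Set (Finset I)) (p : ℕ) : Submodule ℂ (Finset I → ℂ) :=
  Submodule.span ℂ {v | ∃ J : Finset I, J.card = p ∧ J ∈ 𝒜 ∧ v = eVec J}

def KoszulAcyclic (𝒜 : Set (Finset I)) : Prop :=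
  ∀ p : ℕ, ∀ x ∈ koszulChains 𝒜 p, koszulD x = 0 →
    ∃ y ∈ koszulChains 𝒜 (p + 1), koszulD y = x

section LinearOrder

variable {ι α : Type*} [LinearOrder ι]

theorem koszulChains_mono {𝒜 ℬ : Set (Finset ι)} (h : 𝒜 ⊆ ℬ) (p : ℕ) :
    koszulChains 𝒜 p ≤ koszulChains ℬ p :=
  Submodule.span_mono fun _ ⟨J, hJ, hJ𝒜, hv⟩ => ⟨J, hJ, h hJ𝒜, hv⟩

theorem koszulChains_union (𝒜 ℬ : Set (Finset ι)) (p : ℕ) :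
    koszulChains (𝒜 ∪ ℬ) p = koszulChains 𝒜 p ⊔ koszulChains ℬ p := by
  rw [koszulChains, koszulChains, koszulChains, ← Submodule.span_union]
  congr 1
  ext v
  simp only [Set.mem_union, Set.mem_ofPred_eq]
  constructor
  · rintro ⟨J, hJ, hJ𝒜 | hJℬ, hv⟩
    exacts [Or.inl ⟨J, hJ, hJ𝒜, hv⟩, Or.inr ⟨J, hJ, hJℬ, hv⟩]
  · rintro (⟨J, hJ, hJ𝒜, hv⟩ | ⟨J, hJ, hJℬ, hv⟩)
    exacts [⟨J, hJ, Or.inl hJ𝒜, hv⟩, ⟨J, hJ, Or.inr hJℬ, hv⟩]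

theorem card_filter_lt_insert {J : Finset ι} {i : ι} (hi : i ∉ J) (j : ι) :
    ((insert i J).filter (· < j)).card = (J.filter (· < j)).card + if i < j then 1 else 0 := by
  rw [Finset.filter_insert]
  split_ifs
  · exact Finset.card_insert_of_notMem (by simp [hi])
  · rfl

theorem filter_lt_eq_empty_of_subset {T J : Finset ι} {i₀ : ι} (hmin : ∀ i ∈ T, i₀ ≤ i)
    (hJ : J ⊆ T) : J.filter (· < i₀) = ∅ :=
  Finset.filter_eq_empty_iff.2 fun i hi => not_lt.2 (hmin i (hJ hi))

theorem mem_familyFunctor_iff {nab : ι → Set α} {J : Finset ι} {m : α} :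
    m ∈ familyFunctor nab J ↔ (∃ i, m ∈ nab i) ∧ ∀ i ∈ J, m ∈ nab i := by
  rw [familyFunctor]
  split_ifs with hJ
  · simp [hJ]
  · obtain ⟨j, hj⟩ := Finset.nonempty_iff_ne_empty.2 hJ
    simp only [Set.mem_iInter]
    exact ⟨fun h => ⟨⟨j, h j hj⟩, h⟩, And.right⟩

theorem familyFunctor_antitone (nab : ι → Set α) : Antitone (familyFunctor nab) :=
  fun _ _ hJK _ hm =>
    mem_familyFunctor_iff.2 ⟨(mem_familyFunctor_iff.1 hm).1,
      fun i hi => (mem_familyFunctor_iff.1 hm).2 i (hJK hi)⟩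

theorem familyFunctor_eq_empty_or_isLatticePolyhedron {r : ℕ} {G₀ : Finset (Fin r → ℤ)}
    {nab : ι → Set (Fin r → ℝ)} (hunion : IsLatticePolyhedron G₀ (⋃ i, nab i))
    (hinter : ∀ J : Finset ι, J.Nonempty →
      (⋂ i ∈ J, nab i) = ∅ ∨ IsLatticePolyhedron G₀ (⋂ i ∈ J, nab i)) (J : Finset ι) :
    familyFunctor nab J = ∅ ∨ IsLatticePolyhedron G₀ (familyFunctor nab J) := by
  rw [familyFunctor]
  split_ifs with hJ
  · exact Or.inr hunion
  · exact hinter J (Finset.nonempty_iff_ne_empty.2 hJ)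

end LinearOrder

theorem mem_koszulChains {𝒜 : Set (Finset I)} {p : ℕ} {x : Finset I → ℂ} :
    x ∈ koszulChains 𝒜 p ↔ ∀ K, x K ≠ 0 → K.card = p ∧ K ∈ 𝒜 := by
  constructor
  · intro hx
    induction hx using Submodule.span_induction with
    | mem v hv =>
      obtain ⟨J, hJ, hJ𝒜, rfl⟩ := hv
      intro K hK
      obtain rfl : K = J := by by_contra h; simp [eVec, h] at hK
      exact ⟨hJ, hJ𝒜⟩
    | zero => simp
    | add y z _ _ hy hz =>
      intro K hK
      by_cases hyK : y K = 0
      · exact hz K (by simpa [hyK] using hK)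
      · exact hy K hyK
    | smul c y _ hy => exact fun K hK => hy K (right_ne_zero_of_mul hK)
  · intro h
    rw [pi_eq_sum_univ x]
    refine Submodule.sum_mem _ fun K _ => ?_
    by_cases hK : x K = 0
    · simp [hK]
    · refine Submodule.smul_mem _ _ (Submodule.subset_span ⟨K, (h K hK).1, (h K hK).2, ?_⟩)
      funext L
      simp [eVec, eq_comm]

theorem koszulChains_inter (𝒜 ℬ : Set (Finset I)) (p : ℕ) :
    koszulChains (𝒜 ∩ ℬ) p = koszulChains 𝒜 p ⊓ koszulChains ℬ p := by
  ext x
  simp only [Submodule.mem_inf, mem_koszulChains]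
  constructor
  · intro h
    exact ⟨fun K hK => ⟨(h K hK).1, (h K hK).2.1⟩, fun K hK => ⟨(h K hK).1, (h K hK).2.2⟩⟩
  · rintro ⟨h𝒜, hℬ⟩ K hK
    exact ⟨(h𝒜 K hK).1, (h𝒜 K hK).2, (hℬ K hK).2⟩

theorem koszulD_apply (x : Finset I → ℂ) (J : Finset I) :
    koszulD x J = ∑ i ∈ Jᶜ, (-1 : ℂ) ^ (J.filter (· < i)).card * x (insert i J) :=
  rfl

theorem koszulD_koszulD (x : Finset I → ℂ) : koszulD (koszulD x) = 0 := by
  funext J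
  set f : I × I → ℂ := fun q => if q.1 = q.2 then 0 else
    (-1) ^ (J.filter (· < q.1)).card *
      ((-1) ^ ((insert q.1 J).filter (· < q.2)).card * x (insert q.2 (insert q.1 J)))
  have hsum : koszulD (koszulD x) J = ∑ q ∈ Jᶜ ×ˢ Jᶜ, f q := by
    rw [Finset.sum_product]
    refine Finset.sum_congr rfl fun i _ => ?_
    rw [koszulD_apply, Finset.mul_sum, Finset.compl_insert,
      ← Finset.sum_erase Jᶜ (f := fun j => f (i, j)) (a := i) (if_pos rfl)]
    exact Finset.sum_congr rfl fun j hj => (if_neg (Finset.ne_of_mem_erase hj).symm).symm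
  -- swapping the two deleted vertices flips exactly one sign
  have hswap : ∀ q ∈ Jᶜ ×ˢ Jᶜ, f q + f q.swap = 0 := by
    rintro ⟨i, j⟩ hq
    obtain ⟨hi, hj⟩ := Finset.mem_product.1 hq
    rw [Finset.mem_compl] at hi hj
    rcases eq_or_ne i j with rfl | hne
    · simp [f]
    rcases hne.lt_or_gt with hij | hij <;>
    · simp [f, hij.ne, hij.ne', card_filter_lt_insert hi, card_filter_lt_insert hj, hij,
        not_lt.2 hij.le, Finset.insert_comm i j, pow_succ]
      ring
  rw [hsum, Pi.zero_apply]
  refine Finset.sum_involution (fun q _ => q.swap) hswap (fun q _ hq hswap => hq ?_)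
    (fun q hq => Finset.mem_product.2 ⟨(Finset.mem_product.1 hq).2, (Finset.mem_product.1 hq).1⟩)
    (fun q _ => q.swap_swap)
  exact if_pos (congrArg Prod.fst hswap).symm

theorem koszulD_mem_koszulChains {𝒜 : Set (Finset I)} (h𝒜 : IsLowerSet 𝒜) {p : ℕ}
    {x : Finset I → ℂ} (hx : x ∈ koszulChains 𝒜 (p + 1)) : koszulD x ∈ koszulChains 𝒜 p := by
  rw [mem_koszulChains] at hx ⊢
  intro K hK
  obtain ⟨i, hi, hxi⟩ : ∃ i ∈ Kᶜ, x (insert i K) ≠ 0 := by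
    by_contra! h
    exact hK (Finset.sum_eq_zero fun i hi => by rw [h i hi, mul_zero])
  have hiK : i ∉ K := Finset.mem_compl.1 hi
  obtain ⟨hcard, hmem⟩ := hx _ hxi
  rw [Finset.card_insert_of_notMem hiK] at hcard
  exact ⟨by omega, h𝒜 (Finset.subset_insert i K) hmem⟩

theorem koszulD_eq_zero_of_mem_koszulChains_zero {𝒜 : Set (Finset I)} {x : Finset I → ℂ}
    (hx : x ∈ koszulChains 𝒜 0) : koszulD x = 0 := by
  funext J
  refine Finset.sum_eq_zero fun i _ => ?_
  have : x (insert i J) = 0 := by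
    by_contra h
    exact Finset.insert_ne_empty i J (Finset.card_eq_zero.1 (mem_koszulChains.1 hx _ h).1)
  rw [this, mul_zero]

theorem koszulAcyclic_empty : KoszulAcyclic (∅ : Set (Finset I)) := by
  intro p x hx _
  have : x = 0 := funext fun K => by_contra fun h => (mem_koszulChains.1 hx K h).2
  exact ⟨0, zero_mem _, by rw [map_zero, this]⟩

theorem KoszulAcyclic.union {𝒜 ℬ : Set (Finset I)} (h𝒜 : IsLowerSet 𝒜) (hℬ : IsLowerSet ℬ)
    (hA : KoszulAcyclic 𝒜) (hB : KoszulAcyclic ℬ) (hAB : KoszulAcyclic (𝒜 ∩ ℬ)) :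
    KoszulAcyclic (𝒜 ∪ ℬ) := by
  intro p x hx hdx
  rw [koszulChains_union, Submodule.mem_sup] at hx
  obtain ⟨b, hb, c, hc, rfl⟩ := hx
  -- `d b = -d c` is a cycle of `𝒜 ∩ ℬ`, so it bounds some `w` there
  obtain ⟨w, hw, hdw⟩ : ∃ w ∈ koszulChains (𝒜 ∩ ℬ) p, koszulD w = koszulD b := by
    cases p with
    | zero => exact ⟨0, zero_mem _, by rw [map_zero, koszulD_eq_zero_of_mem_koszulChains_zero hb]⟩
    | succ q =>
      have hdb : koszulD b = -koszulD c := eq_neg_of_add_eq_zero_left (by rwa [← map_add])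
      refine hAB q _ ?_ (koszulD_koszulD b)
      rw [koszulChains_inter]
      exact ⟨koszulD_mem_koszulChains h𝒜 hb, hdb ▸ neg_mem (koszulD_mem_koszulChains hℬ hc)⟩
  have hw𝒜 := koszulChains_mono Set.inter_subset_left p hw
  have hwℬ := koszulChains_mono Set.inter_subset_right p hw
  obtain ⟨β, hβ, hdβ⟩ := hA p (b - w) (sub_mem hb hw𝒜) (by rw [map_sub, hdw, sub_self])
  obtain ⟨γ, hγ, hdγ⟩ := hB p (c + w) (add_mem hc hwℬ)
    (by rw [map_add, hdw, add_comm, ← map_add, hdx])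
  refine ⟨β + γ, ?_, by rw [map_add, hdβ, hdγ]; abel⟩
  rw [koszulChains_union]
  exact Submodule.add_mem_sup hβ hγ

def koszulCone (i₀ : I) (x : Finset I → ℂ) : Finset I → ℂ :=
  fun K => if i₀ ∈ K then x (K.erase i₀) else 0

theorem koszulCone_mem_koszulChains {T : Finset I} {i₀ : I} (hi₀ : i₀ ∈ T) {p : ℕ}
    {x : Finset I → ℂ} (hx : x ∈ koszulChains (Set.Iic T) p) :
    koszulCone i₀ x ∈ koszulChains (Set.Iic T) (p + 1) := by
  rw [mem_koszulChains] at hx ⊢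
  intro K hK
  by_cases hK₀ : i₀ ∈ K
  · obtain ⟨hcard, hsub⟩ := hx _ (by simpa [koszulCone, hK₀] using hK)
    refine ⟨by rw [← Finset.card_erase_add_one hK₀, hcard], ?_⟩
    rw [← Finset.insert_erase hK₀]
    exact Finset.insert_subset hi₀ hsub
  · simp [koszulCone, hK₀] at hK

theorem koszulD_koszulCone_apply_of_notMem {T : Finset I} {i₀ : I} (hmin : ∀ i ∈ T, i₀ ≤ i)
    {p : ℕ} {x : Finset I → ℂ} (hx : x ∈ koszulChains (Set.Iic T) p) {J : Finset I}
    (hJ : i₀ ∉ J) : koszulD (koszulCone i₀ x) J = x J := by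
  rw [koszulD_apply, Finset.sum_eq_single_of_mem i₀ (Finset.mem_compl.2 hJ)]
  · by_cases hxJ : x J = 0
    · simp [koszulCone, Finset.erase_insert hJ, hxJ]
    · rw [filter_lt_eq_empty_of_subset hmin ((mem_koszulChains.1 hx J hxJ).2)]
      simp [koszulCone, Finset.erase_insert hJ]
  · intro i _ hi
    simp [koszulCone, hJ, Ne.symm hi]

theorem koszulD_koszulCone_apply_insert {T : Finset I} {i₀ : I} (hmin : ∀ i ∈ T, i₀ ≤ i)
    {p : ℕ} {x : Finset I → ℂ} (hx : x ∈ koszulChains (Set.Iic T) p) (hdx : koszulD x = 0)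
    {J : Finset I} (hJ : i₀ ∉ J) : koszulD (koszulCone i₀ x) (insert i₀ J) = x (insert i₀ J) := by
  -- on faces containing `i₀`, the sign of the cone is one more than the sign of `x`
  have hterm : ∀ i ∈ (insert i₀ J)ᶜ, (-1 : ℂ) ^ ((insert i₀ J).filter (· < i)).card *
      koszulCone i₀ x (insert i (insert i₀ J)) =
        -((-1) ^ (J.filter (· < i)).card * x (insert i J)) := by
    intro i hi
    have hii₀ : i ≠ i₀ := fun h => Finset.mem_compl.1 hi (h ▸ Finset.mem_insert_self i₀ J)
    simp only [koszulCone, Finset.mem_insert_self, Finset.mem_insert_of_mem, if_true,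
      Finset.erase_insert_of_ne hii₀, Finset.erase_insert hJ]
    by_cases hxi : x (insert i J) = 0
    · simp [hxi]
    · have hiT : i ∈ T := (mem_koszulChains.1 hx _ hxi).2 (Finset.mem_insert_self i J)
      rw [card_filter_lt_insert hJ, if_pos ((hmin i hiT).lt_of_ne hii₀.symm), pow_succ]
      ring
  have hcycle := congrFun hdx J
  rw [Pi.zero_apply, koszulD_apply, ← Finset.add_sum_erase _ _ (Finset.mem_compl.2 hJ)] at hcycle
  rw [koszulD_apply, Finset.sum_congr rfl hterm, Finset.sum_neg_distrib, Finset.compl_insert,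
    eq_neg_of_add_eq_zero_right hcycle, neg_neg]
  by_cases hxJ : x (insert i₀ J) = 0
  · rw [hxJ, mul_zero]
  · have hJT : J ⊆ T := (Finset.subset_insert i₀ J).trans (mem_koszulChains.1 hx _ hxJ).2
    rw [filter_lt_eq_empty_of_subset hmin hJT]
    simp

theorem koszulAcyclic_Iic {T : Finset I} (hT : T.Nonempty) : KoszulAcyclic (Set.Iic T) := by
  intro p x hx hdx
  have hmin : ∀ i ∈ T, T.min' hT ≤ i := fun i hi => T.min'_le i hi
  refine ⟨koszulCone (T.min' hT) x, koszulCone_mem_koszulChains (T.min'_mem hT) hx, ?_⟩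
  funext J
  by_cases hJ : T.min' hT ∈ J
  · rw [← Finset.insert_erase hJ]
    exact koszulD_koszulCone_apply_insert hmin hx hdx (Finset.notMem_erase _ J)
  · exact koszulD_koszulCone_apply_of_notMem hmin hx hJ

theorem koszulAcyclic_biUnion {α : Type*} [LinearOrder α] {P : α → Set (Finset I)}
    (s : Finset α) (hconn : ∀ J, {t | J ∈ P t}.OrdConnected)
    (hlower : ∀ t ∈ s, IsLowerSet (P t)) (hacyc : ∀ t ∈ s, KoszulAcyclic (P t))
    (hcons : ∀ a ∈ s, ∀ b ∈ s, a < b → (∀ c ∈ s, c ≤ a ∨ b ≤ c) → KoszulAcyclic (P a ∩ P b)) :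
    KoszulAcyclic (⋃ t ∈ s, P t) := by
  induction s using Finset.induction_on_min with
  | empty => simpa using koszulAcyclic_empty
  | insert a s has ih =>
    rw [Finset.set_biUnion_insert]
    rcases s.eq_empty_or_nonempty with rfl | hs
    · simpa using hacyc a (Finset.mem_singleton_self a)
    have hb := s.min'_mem hs
    -- by convexity, faces of `P a` that occur further along the chain occur in `P (min s)`
    have hinter : P a ∩ ⋃ t ∈ s, P t = P a ∩ P (s.min' hs) := by
      refine subset_antisymm ?_ (Set.inter_subset_inter_right _ (Set.subset_biUnion_of_mem hb))
      rintro J ⟨hJa, hJs⟩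
      obtain ⟨t, ht, hJt⟩ := Set.mem_iUnion₂.1 hJs
      exact ⟨hJa, (hconn J).out hJa hJt ⟨(has _ hb).le, s.min'_le t ht⟩⟩
    refine (hacyc a (Finset.mem_insert_self a s)).union (hlower a (Finset.mem_insert_self a s))
      (isLowerSet_iUnion₂ fun t ht => hlower t (Finset.mem_insert_of_mem ht))
      (ih (fun t ht => hlower t (Finset.mem_insert_of_mem ht))
        (fun t ht => hacyc t (Finset.mem_insert_of_mem ht)) fun a' ha' b' hb' hab' hcons' => ?_) ?_
    · refine hcons a' (Finset.mem_insert_of_mem ha') b' (Finset.mem_insert_of_mem hb') hab' ?_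
      intro c hc
      rcases Finset.mem_insert.1 hc with rfl | hc
      exacts [Or.inl (has a' ha').le, hcons' c hc]
    · rw [hinter]
      refine hcons a (Finset.mem_insert_self a s) _ (Finset.mem_insert_of_mem hb) (has _ hb) ?_
      intro c hc
      rcases Finset.mem_insert.1 hc with rfl | hc
      exacts [Or.inl le_rfl, Or.inr (s.min'_le c hc)]

theorem IsClosed.mem_of_le_of_csInf_notMem_Ioc {S : Set ℝ} (hS : IsClosed S)
    (hconn : S.OrdConnected) {a x : ℝ} (hx : x ∈ S) (hax : a ≤ x) (hinf : sInf S ∉ Set.Ioc a x) :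
    a ∈ S := by
  by_cases hbdd : BddBelow S
  · have hle : sInf S ≤ a := not_lt.1 fun h => hinf ⟨h, csInf_le hbdd hx⟩
    exact hconn.out (hS.csInf_mem ⟨x, hx⟩ hbdd) hx ⟨hle, hax⟩
  · obtain ⟨z, hz, hza⟩ := not_bddBelow_iff.1 hbdd a
    exact hconn.out hz hx ⟨hza.le, hax⟩

theorem IsClosed.mem_of_ge_of_csSup_notMem_Ico {S : Set ℝ} (hS : IsClosed S)
    (hconn : S.OrdConnected) {b x : ℝ} (hx : x ∈ S) (hxb : x ≤ b) (hsup : sSup S ∉ Set.Ico x b) :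
    b ∈ S := by
  by_cases hbdd : BddAbove S
  · have hle : b ≤ sSup S := not_lt.1 fun h => hsup ⟨le_csSup hbdd hx, h⟩
    exact hconn.out hx (hS.csSup_mem ⟨x, hx⟩ hbdd) ⟨hxb, hle⟩
  · obtain ⟨z, hz, hbz⟩ := not_bddAbove_iff.1 hbdd b
    exact hconn.out hx hz ⟨hxb, hbz.le⟩

theorem IsClosed.csInf_mem_or_csSup_mem_or_zero_mem {S : Set ℝ} (hS : IsClosed S)
    (hconn : S.OrdConnected) (hne : S.Nonempty) : sInf S ∈ S ∨ sSup S ∈ S ∨ (0 : ℝ) ∈ S := by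
  by_cases hbelow : BddBelow S
  · exact Or.inl (hS.csInf_mem hne hbelow)
  by_cases habove : BddAbove S
  · exact Or.inr (Or.inl (hS.csSup_mem hne habove))
  obtain ⟨z₁, hz₁, hz₁0⟩ := not_bddBelow_iff.1 hbelow 0
  obtain ⟨z₂, hz₂, hz₂0⟩ := not_bddAbove_iff.1 habove 0
  exact Or.inr (Or.inr (hconn.out hz₁ hz₂ ⟨hz₁0.le, hz₂0.le⟩))

theorem koszulAcyclic_iUnion {P : ℝ → Set (Finset I)} (hlower : ∀ t, IsLowerSet (P t))
    (hacyc : ∀ t, KoszulAcyclic (P t)) (hconn : ∀ J, {t | J ∈ P t}.OrdConnected)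
    (hclosed : ∀ J, IsClosed {t | J ∈ P t}) : KoszulAcyclic (⋃ t, P t) := by
  -- the endpoints of the intervals `{t | J ∈ P t}` (junk values where they do not exist), and `0`
  set E : Finset ℝ := insert 0 (Finset.univ.image (fun J => sInf {t | J ∈ P t}) ∪
    Finset.univ.image (fun J => sSup {t | J ∈ P t}))
  have hinfE : ∀ J, sInf {t | J ∈ P t} ∈ E := by simp [E]
  have hsupE : ∀ J, sSup {t | J ∈ P t} ∈ E := by simp [E]
  have hcover : ⋃ t, P t = ⋃ t ∈ E, P t := by
    refine subset_antisymm (Set.iUnion_subset fun t J hJ => ?_)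
      (Set.iUnion₂_subset fun t _ => Set.subset_iUnion P t)
    rcases (hclosed J).csInf_mem_or_csSup_mem_or_zero_mem (hconn J) ⟨t, hJ⟩ with h | h | h
    exacts [Set.mem_biUnion (hinfE J) h, Set.mem_biUnion (hsupE J) h,
      Set.mem_biUnion (Finset.mem_insert_self 0 _) h]
  rw [hcover]
  refine koszulAcyclic_biUnion E hconn (fun t _ => hlower t) (fun t _ => hacyc t)
    fun a _ b _ hab hcons => ?_
  -- no endpoint lies strictly between `a` and `b`, so both belong to every interval
  -- containing the midpoint
  have hgap : ∀ c ∈ E, c ∉ Set.Ioo a b := fun c hc h =>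
    (hcons c hc).elim (fun h' => h.1.not_ge h') (fun h' => h.2.not_ge h')
  convert hacyc ((a + b) / 2) using 1
  ext J
  constructor
  · rintro ⟨ha, hb⟩
    exact (hconn J).out ha hb ⟨by linarith, by linarith⟩
  · intro hmid
    refine ⟨(hclosed J).mem_of_le_of_csInf_notMem_Ioc (hconn J) hmid (by linarith) fun h =>
      hgap _ (hinfE J) ⟨h.1, by linarith [h.2]⟩,
      (hclosed J).mem_of_ge_of_csSup_notMem_Ico (hconn J) hmid (by linarith) fun h =>
      hgap _ (hsupE J) ⟨by linarith [h.1], h.2⟩⟩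

section ConicHull

variable {ι E : Type*} [AddCommGroup E] [Module ℝ E]

def conicHull (v : ι → E) (s : Finset ι) : Set E :=
  {x | ∃ c : ι → ℝ, (∀ i, 0 ≤ c i) ∧ x = ∑ i ∈ s, c i • v i}

theorem conicHull_empty (v : ι → E) : conicHull v ∅ = 0 := by
  ext x
  simp only [conicHull, Finset.sum_empty, Set.mem_ofPred_eq, Set.mem_zero]
  exact ⟨fun ⟨_, _, hx⟩ => hx, fun hx => ⟨0, fun _ => le_rfl, hx⟩⟩

theorem convex_conicHull (v : ι → E) (s : Finset ι) : Convex ℝ (conicHull v s) := by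
  rintro _ ⟨c, hc, rfl⟩ _ ⟨d, hd, rfl⟩ a b ha hb _
  refine ⟨a • c + b • d, fun i => ?_, ?_⟩
  · exact add_nonneg (mul_nonneg ha (hc i)) (mul_nonneg hb (hd i))
  · simp only [Finset.smul_sum, smul_smul, ← Finset.sum_add_distrib, ← add_smul, Pi.add_apply,
      Pi.smul_apply, smul_eq_mul]

theorem sum_smul_eq_sum_indicator_smul {s u : Finset ι} (h : s ⊆ u) (c : ι → ℝ) (v : ι → E) :
    ∑ i ∈ s, c i • v i = ∑ i ∈ u, (s : Set ι).indicator c i • v i := by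
  rw [← Finset.sum_indicator_subset _ h]
  exact Finset.sum_congr rfl fun i _ => Set.indicator_smul_apply_left _ _ _ _

theorem conicHull_union [DecidableEq ι] (v : ι → E) (s t : Finset ι) :
    conicHull v (s ∪ t) = conicHull v s + conicHull v t := by
  ext x
  constructor
  · rintro ⟨c, hc, rfl⟩
    refine ⟨_, ⟨c, hc, rfl⟩, ∑ i ∈ t \ s, c i • v i, ⟨_, fun i => Set.indicator_nonneg
      (fun i _ => hc i) i, sum_smul_eq_sum_indicator_smul Finset.sdiff_subset c v⟩, ?_⟩
    dsimp only
    rw [← Finset.sum_union Finset.disjoint_sdiff, Finset.union_sdiff_self_eq_union]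
  · rintro ⟨_, ⟨c, hc, rfl⟩, _, ⟨d, hd, rfl⟩, rfl⟩
    refine ⟨(s : Set ι).indicator c + (t : Set ι).indicator d, fun i => add_nonneg
      (Set.indicator_nonneg (fun i _ => hc i) i) (Set.indicator_nonneg (fun i _ => hd i) i), ?_⟩
    simp only [Pi.add_apply, add_smul, Finset.sum_add_distrib,
      ← sum_smul_eq_sum_indicator_smul Finset.subset_union_left,
      ← sum_smul_eq_sum_indicator_smul Finset.subset_union_right]

theorem mem_conicHull_singleton {v : ι → E} {i : ι} {x : E} :
    x ∈ conicHull v {i} ↔ ∃ t : ℝ, 0 ≤ t ∧ x = t • v i := by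
  simp only [conicHull, Finset.sum_singleton, Set.mem_ofPred_eq]
  exact ⟨fun ⟨c, hc, hx⟩ => ⟨c i, hc i, hx⟩, fun ⟨t, ht, hx⟩ => ⟨fun _ => t, fun _ => ht, hx⟩⟩

theorem mem_add_conicHull_insert [DecidableEq ι] {A : Set E} {v : ι → E} {i : ι} {s : Finset ι}
    {x : E} : x ∈ A + conicHull v (insert i s) ↔
      ∃ t : ℝ, 0 ≤ t ∧ x - t • v i ∈ A + conicHull v s := by
  rw [Finset.insert_eq, conicHull_union, add_comm (conicHull v {i}), ← add_assoc]
  constructor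
  · rintro ⟨y, hy, z, hz, rfl⟩
    obtain ⟨t, ht, rfl⟩ := mem_conicHull_singleton.1 hz
    exact ⟨t, ht, by rwa [add_sub_cancel_right]⟩
  · rintro ⟨t, ht, hx⟩
    exact ⟨_, hx, t • v i, mem_conicHull_singleton.2 ⟨t, ht, rfl⟩, sub_add_cancel x _⟩

theorem conicHull_mono (v : ι → E) {s t : Finset ι} (h : s ⊆ t) :
    conicHull v s ⊆ conicHull v t := by
  rintro _ ⟨c, hc, rfl⟩
  exact ⟨_, fun i => Set.indicator_nonneg (fun i _ => hc i) i, sum_smul_eq_sum_indicator_smul h c v⟩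

theorem conicHull_eq_image_linearCombination (v : ι → E) (s : Finset ι) :
    conicHull v s = Fintype.linearCombination ℝ (fun i : s => v i) '' Set.Ici 0 := by
  ext x
  simp only [conicHull, Set.mem_ofPred_eq, Set.mem_image, Set.mem_Ici,
    Fintype.linearCombination_apply]
  constructor
  · rintro ⟨c, hc, rfl⟩
    exact ⟨fun i => c i, fun i => hc i, (Finset.sum_coe_sort s fun i => c i • v i)⟩
  · rintro ⟨c, hc, rfl⟩
    classical
    refine ⟨fun i => if h : i ∈ s then c ⟨i, h⟩ else 0, fun i => ?_, ?_⟩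
    · dsimp only
      split_ifs
      exacts [hc _, le_rfl]
    · rw [← Finset.sum_coe_sort s]
      exact Finset.sum_congr rfl fun i _ => by simp

theorem isClosed_conicHull_of_linearIndepOn [TopologicalSpace E] [IsTopologicalAddGroup E]
    [ContinuousSMul ℝ E] [T2Space E] {v : ι → E} {s : Finset ι}
    (h : LinearIndepOn ℝ v (s : Set ι)) : IsClosed (conicHull v s) := by
  rw [conicHull_eq_image_linearCombination]
  have hinj := linearIndependent_iff_injective_fintypeLinearCombination.1 h
  exact (LinearMap.isClosedEmbedding_of_injective (LinearMap.ker_eq_bot.2 hinj)).isClosedMap _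
    isClosed_Ici

theorem exists_relation_pos_of_not_linearIndepOn {v : ι → E} {s : Finset ι}
    (h : ¬LinearIndepOn ℝ v (s : Set ι)) :
    ∃ μ : ι → ℝ, ∑ i ∈ s, μ i • v i = 0 ∧ (∃ i ∈ s, 0 < μ i) ∧ ∀ i ∉ s, μ i = 0 := by
  obtain ⟨μ, hμ, i₁, hi₁, hμi₁⟩ := not_linearIndepOn_finset_iff.1 h
  have hsupp : ∀ ν : ι → ℝ, ∀ i ∉ s, (s : Set ι).indicator ν i = 0 :=
    fun ν i hi => Set.indicator_of_notMem (Finset.mem_coe.not.2 hi) ν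
  rcases hμi₁.lt_or_gt with hneg | hpos
  · refine ⟨(s : Set ι).indicator (-μ), ?_, ⟨i₁, hi₁, ?_⟩, hsupp _⟩
    · simp [← sum_smul_eq_sum_indicator_smul subset_rfl, neg_smul, hμ]
    · simpa [Set.indicator_of_mem (Finset.mem_coe.2 hi₁)] using hneg
  · refine ⟨(s : Set ι).indicator μ, ?_, ⟨i₁, hi₁, ?_⟩, hsupp _⟩
    · rw [← sum_smul_eq_sum_indicator_smul subset_rfl, hμ]
    · simpa [Set.indicator_of_mem (Finset.mem_coe.2 hi₁)] using hpos

-- Conic Carathéodory: a linear relation among the generators lets one of them be dropped.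
theorem conicHull_subset_iUnion_erase [DecidableEq ι] {v : ι → E} {s : Finset ι}
    (h : ¬LinearIndepOn ℝ v (s : Set ι)) : conicHull v s ⊆ ⋃ i ∈ s, conicHull v (s.erase i) := by
  obtain ⟨μ, hμ, ⟨i₁, hi₁, hμi₁⟩, hμs⟩ := exists_relation_pos_of_not_linearIndepOn h
  rintro _ ⟨c, hc, rfl⟩
  -- subtract the largest multiple of the relation keeping all coefficients nonnegative
  obtain ⟨i₀, hi₀, hmin⟩ := Finset.exists_min_image (s.filter (0 < μ ·)) (fun i => c i / μ i)
    ⟨i₁, Finset.mem_filter.2 ⟨hi₁, hμi₁⟩⟩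
  obtain ⟨hi₀s, hμi₀⟩ := Finset.mem_filter.1 hi₀
  set t := c i₀ / μ i₀
  have ht : 0 ≤ t := div_nonneg (hc i₀) hμi₀.le
  refine Set.mem_biUnion hi₀s ⟨c - t • μ, fun i => ?_, ?_⟩
  · simp only [Pi.sub_apply, Pi.smul_apply, smul_eq_mul, sub_nonneg]
    by_cases hμi : 0 < μ i
    · have his : i ∈ s := by_contra fun his => hμi.ne' (hμs i his)
      exact (le_div_iff₀ hμi).1 (hmin i (Finset.mem_filter.2 ⟨his, hμi⟩))
    · exact (mul_nonpos_of_nonneg_of_nonpos ht (not_lt.1 hμi)).trans (hc i)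
  · have hi₀zero : (c - t • μ) i₀ • v i₀ = 0 := by
      change (c i₀ - c i₀ / μ i₀ * μ i₀) • v i₀ = 0
      rw [div_mul_cancel₀ _ hμi₀.ne', sub_self, zero_smul]
    rw [Finset.sum_erase s (f := fun i => (c - t • μ) i • v i) hi₀zero]
    simp only [Pi.sub_apply, Pi.smul_apply, smul_eq_mul, sub_smul, Finset.sum_sub_distrib,
      mul_smul, ← Finset.smul_sum, hμ, smul_zero, sub_zero]

theorem isClosed_conicHull [TopologicalSpace E] [IsTopologicalAddGroup E] [ContinuousSMul ℝ E]
    [T2Space E] (v : ι → E) (s : Finset ι) : IsClosed (conicHull v s) := by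
  classical
  induction s using Finset.strongInduction with
  | H s ih =>
    by_cases h : LinearIndepOn ℝ v (s : Set ι)
    · exact isClosed_conicHull_of_linearIndepOn h
    · rw [(conicHull_subset_iUnion_erase h).antisymm
        (Set.iUnion₂_subset fun i _ => conicHull_mono v (s.erase_subset i))]
      exact isClosed_biUnion_finset fun i hi => ih _ (Finset.erase_ssubset hi)

end ConicHull

theorem koszulAcyclic_setOf_mem_add_conicHull {ι E : Type*} [AddCommGroup E] [Module ℝ E]
    [TopologicalSpace E] [IsTopologicalAddGroup E] [ContinuousSMul ℝ E]
    {F : Finset I → Set E} (hF : Antitone F) (hconv : ∀ J, Convex ℝ (F J)) (v : ι → E)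
    (hclosed : ∀ J s, IsClosed (F J + conicHull v s)) (hbase : ∀ m, KoszulAcyclic {J | m ∈ F J})
    (s : Finset ι) (m : E) : KoszulAcyclic {J | m ∈ F J + conicHull v s} := by
  classical
  induction s using Finset.induction_on generalizing m with
  | empty => simpa [conicHull_empty] using hbase m
  | insert i s _ ih =>
    set P : ℝ → Set (Finset I) := fun t => {J | 0 ≤ t ∧ m - t • v i ∈ F J + conicHull v s}
    -- `AffineMap.lineMap m (m - v i)` is `t ↦ m - t • v i`
    have hslice : ∀ J, {t | J ∈ P t} =
        Set.Ici 0 ∩ AffineMap.lineMap m (m - v i) ⁻¹' (F J + conicHull v s) := by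
      intro J
      ext t
      simp [P, AffineMap.lineMap_apply, sub_eq_neg_add]
    have hunion : {J | m ∈ F J + conicHull v (insert i s)} = ⋃ t, P t := by
      ext J
      simp [P, mem_add_conicHull_insert]
    rw [hunion]
    refine koszulAcyclic_iUnion (fun t => ?_) (fun t => ?_) (fun J => ?_) (fun J => ?_)
    · rintro J K hKJ ⟨ht, hJ⟩
      exact ⟨ht, Set.add_subset_add_right (hF hKJ) hJ⟩
    · by_cases ht : 0 ≤ t
      · simpa [P, ht] using ih (m - t • v i)
      · simpa [P, ht] using koszulAcyclic_empty
    · rw [hslice]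
      exact Set.ordConnected_Ici.inter
        (((hconv J).add (convex_conicHull v s)).affine_preimage _).ordConnected
    · rw [hslice]
      exact isClosed_Ici.inter ((hclosed J s).preimage (AffineMap.lineMap_continuous))

theorem koszulAcyclic_setOf_mem_familyFunctor {α : Type*} (nab : I → Set α) (m : α) :
    KoszulAcyclic {J | m ∈ familyFunctor nab J} := by
  classical
  by_cases hm : ∃ i, m ∈ nab i
  · obtain ⟨i, hi⟩ := hm
    have hsimplex : {J | m ∈ familyFunctor nab J} = Set.Iic (Finset.univ.filter (m ∈ nab ·)) := by
      ext J
      simpa [mem_familyFunctor_iff, Finset.subset_iff] using fun _ => ⟨i, hi⟩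
    rw [hsimplex]
    exact koszulAcyclic_Iic ⟨i, by simpa using hi⟩
  · have hvoid : {J | m ∈ familyFunctor nab J} = ∅ := by
      ext J
      simp [mem_familyFunctor_iff, hm]
    rw [hvoid]
    exact koszulAcyclic_empty

theorem latticeCone_eq_conicHull {r : ℕ} (G : Finset (Fin r → ℤ)) :
    latticeCone G = conicHull intVec G :=
  rfl

theorem IsLatticePolyhedron.convex {r : ℕ} {G₀ : Finset (Fin r → ℤ)} {A : Set (Fin r → ℝ)}
    (h : IsLatticePolyhedron G₀ A) : Convex ℝ A := by
  obtain ⟨S, -, rfl⟩ := h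
  exact (convex_convexHull ℝ _).add (convex_conicHull intVec G₀)

theorem IsLatticePolyhedron.isClosed_add_latticeCone {r : ℕ} {G₀ : Finset (Fin r → ℤ)}
    {A : Set (Fin r → ℝ)} (h : IsLatticePolyhedron G₀ A) (G : Finset (Fin r → ℤ)) :
    IsClosed (A + latticeCone G) := by
  obtain ⟨S, -, rfl⟩ := h
  rw [add_assoc, latticeCone_eq_conicHull, latticeCone_eq_conicHull, ← conicHull_union]
  exact (isClosed_conicHull intVec _).add_left_of_isCompact
    ((S.finite_toSet.image intVec).isCompact_convexHull (𝕜 := ℝ))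

theorem evalExact_iff_koszulAcyclic {α : Type*} (F : Finset I → Set α) (m : α) :
    evalExact F m ↔ KoszulAcyclic {J | m ∈ F J} :=
  Iff.rfl

theorem evalExact_family_add_cone_general {r : ℕ} (G₀ : Finset (Fin r → ℤ))
    (nab : I → Set (Fin r → ℝ))
    (hunion : IsLatticePolyhedron G₀ (⋃ i, nab i))
    (hinter : ∀ J : Finset I, J.Nonempty →
      (⋂ i ∈ J, nab i) = ∅ ∨ IsLatticePolyhedron G₀ (⋂ i ∈ J, nab i)) :
    ∀ (G : Finset (Fin r → ℤ)) (m : Fin r → ℝ),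
      evalExact (fun J => familyFunctor nab J + latticeCone G) m := by
  intro G m
  have hpoly := familyFunctor_eq_empty_or_isLatticePolyhedron hunion hinter
  rw [evalExact_iff_koszulAcyclic]
  refine koszulAcyclic_setOf_mem_add_conicHull (F := familyFunctor nab)
    (familyFunctor_antitone nab) (fun J => ?_) intVec (fun J s => ?_)
    (koszulAcyclic_setOf_mem_familyFunctor nab) G m
  · rcases hpoly J with h | h
    · rw [h]
      exact convex_empty
    · exact h.convex
  · rcases hpoly J with h | h
    · rw [h, Set.empty_add]
      exact isClosed_empty
    · exact h.isClosed_add_latticeCone s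

/-- the algebraic content of Theorem 8 of the paper, combining Lemma 4
and Proposition 7.  Let `(∇_i)_{i∈I}` be a finite family of lattice polyhedra in `ℝʳ`,
all with tail cone `C₀ = latticeCone G₀`, such that `∇ = ⋃_i ∇_i` is a lattice polyhedron
with tail cone `C₀` and every nonempty intersection `∇_{I'} = ⋂_{i∈I'} ∇_i` is a lattice
polyhedron with tail cone `C₀`; set `F(∅) := ∇` and `F(I') := ∇_{I'}`.  Then for every
convex cone `C = latticeCone G` generated with nonnegative real coefficients by a finite
subset `G` of `ℤʳ` and every `m ∈ ℝʳ`, the evaluation subcomplex `C^{F^C}_•(m)` of the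
functor `F^C(I') := F(I') + C` is exact. -/
theorem evalExact_family_add_cone {r : ℕ} (G₀ : Finset (Fin r → ℤ))
    (nab : I → Set (Fin r → ℝ))
    (hnab : ∀ i, IsLatticePolyhedron G₀ (nab i))
    (hunion : IsLatticePolyhedron G₀ (⋃ i, nab i))
    (hinter : ∀ J : Finset I, J.Nonempty →
      (⋂ i ∈ J, nab i) = ∅ ∨ IsLatticePolyhedron G₀ (⋂ i ∈ J, nab i)) :
    ∀ (G : Finset (Fin r → ℤ)) (m : Fin r → ℝ),
      evalExact (fun J => familyFunctor nab J + latticeCone G) m :=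
  evalExact_family_add_cone_general G₀ nab hunion hinter

end
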